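/- Let G be a simple graph on n vertices and S ⊆ V. The partition vector p_S is an eigenvector of the Laplacian L(G) with eigenvalue μ if and only if every vertex of G has exactly μ/2 neighbors on the opposite side of the partition {S, V\S} (i.e., the bipartite subgraph induced by the edges between S and V\S is (μ/2)-regular on all of V). -/

import Mathlib

open Finset Matrix BigOperators

set_option linter.unusedSectionVars false

variable {V : Type*} [Fintype V] [DecidableEq V]

/-- Number of edges of `G` with exactly one endpoint in `S` (each unordered edge counted once,
as the ordered pair going out of `S`). -/
def cutNum (G : SimpleGraph V) [DecidableRel G.Adj] (S : Finset V) : ℕ :=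
  (Finset.univ.filter (fun p : V × V => G.Adj p.1 p.2 ∧ p.1 ∈ S ∧ p.2 ∉ S)).card

/-- Number of edges of `G` with both endpoints in `S` or both outside `S`. -/
def cohNum (G : SimpleGraph V) [DecidableRel G.Adj] (S : Finset V) : ℕ :=
  G.edgeFinset.card - cutNum G S

/-- The maximum cut of `G`. -/
def mcut (G : SimpleGraph V) [DecidableRel G.Adj] : ℕ :=
  Finset.univ.sup (fun S : Finset V => cutNum G S)

/-- The ±1 partition vector of a vertex subset `S`. -/
def pvec (S : Finset V) : V → ℝ := fun v => if v ∈ S then 1 else -1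

/-- The signless Laplacian matrix `Q = D + A` of a graph. -/
def signlessLap (G : SimpleGraph V) [DecidableRel G.Adj] : Matrix V V ℝ :=
  G.degMatrix ℝ + G.adjMatrix ℝ

lemma isHermitian_adj (G : SimpleGraph V) [DecidableRel G.Adj] :
    (G.adjMatrix ℝ).IsHermitian := by
  rw [IsHermitian, conjTranspose_eq_transpose_of_trivial]
  exact SimpleGraph.isSymm_adjMatrix G

lemma isHermitian_lap (G : SimpleGraph V) [DecidableRel G.Adj] :
    (G.lapMatrix ℝ).IsHermitian := by
  rw [IsHermitian, conjTranspose_eq_transpose_of_trivial]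
  exact SimpleGraph.isSymm_lapMatrix ℝ G

lemma isHermitian_signlessLap (G : SimpleGraph V) [DecidableRel G.Adj] :
    (signlessLap G).IsHermitian := by
  rw [IsHermitian, conjTranspose_eq_transpose_of_trivial]
  exact (SimpleGraph.isSymm_degMatrix ℝ G).add (SimpleGraph.isSymm_adjMatrix G)

/-- The spanning subgraph of `G` consisting of the edges between `S` and its complement. -/
def crossGraph (G : SimpleGraph V) (S : Finset V) : SimpleGraph V where
  Adj u v := G.Adj u v ∧ ((u ∈ S) ↔ (v ∉ S))
  symm := ⟨fun u v h => ⟨h.1.symm, by tauto⟩⟩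
  loopless := ⟨fun v h => G.loopless.irrefl v h.1⟩

/-- The spanning subgraph of `G` consisting of the edges inside `S` or inside its complement. -/
def insideGraph (G : SimpleGraph V) (S : Finset V) : SimpleGraph V where
  Adj u v := G.Adj u v ∧ ((u ∈ S) ↔ (v ∈ S))
  symm := ⟨fun u v h => ⟨h.1.symm, h.2.symm⟩⟩
  loopless := ⟨fun v h => G.loopless.irrefl v h.1⟩

instance (G : SimpleGraph V) [DecidableRel G.Adj] (S : Finset V) :
    DecidableRel (crossGraph G S).Adj := fun u v =>
  inferInstanceAs (Decidable (G.Adj u v ∧ ((u ∈ S) ↔ (v ∉ S))))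

instance (G : SimpleGraph V) [DecidableRel G.Adj] (S : Finset V) :
    DecidableRel (insideGraph G S).Adj := fun u v =>
  inferInstanceAs (Decidable (G.Adj u v ∧ ((u ∈ S) ↔ (v ∈ S))))

/-- The second largest value (with multiplicity) of a finitely indexed family of reals. -/
noncomputable def secondLargest (f : V → ℝ) : ℝ :=
  (Multiset.sort (Finset.univ.val.map f) (· ≤ ·)).getD (Fintype.card V - 2) 0

/-- The join of two graphs: disjoint union plus all edges in between. -/
def joinGraph {α β : Type*} (H₁ : SimpleGraph α) (H₂ : SimpleGraph β) :
    SimpleGraph (α ⊕ β) where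
  Adj x y :=
    match x, y with
    | Sum.inl u, Sum.inl v => H₁.Adj u v
    | Sum.inr u, Sum.inr v => H₂.Adj u v
    | Sum.inl _, Sum.inr _ => True
    | Sum.inr _, Sum.inl _ => True
  symm := by constructor; rintro (u | u) (v | v) h <;> first | exact h.symm | trivial
  loopless := by
    constructor
    rintro (u | u) h
    · exact H₁.loopless.irrefl u h
    · exact H₂.loopless.irrefl u h

instance {α β : Type*} (H₁ : SimpleGraph α) (H₂ : SimpleGraph β)
    [DecidableRel H₁.Adj] [DecidableRel H₂.Adj] :
    DecidableRel (joinGraph H₁ H₂).Adj := fun x y =>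
  match x, y with
  | Sum.inl u, Sum.inl v => inferInstanceAs (Decidable (H₁.Adj u v))
  | Sum.inr u, Sum.inr v => inferInstanceAs (Decidable (H₂.Adj u v))
  | Sum.inl _, Sum.inr _ => inferInstanceAs (Decidable True)
  | Sum.inr _, Sum.inl _ => inferInstanceAs (Decidable True)

/-! Since `(L x)_v = ∑_{u ∼ v} (x_v - x_u)`, a neighbour of `v` on the same side of `{S, V \ S}`
contributes `0` to `(L p_S)_v` and one on the opposite side contributes `2 p_S(v)`. Hence
`(L p_S)_v = 2 d_v(S, V \ S) p_S(v)`, and as `p_S` never vanishes, `L p_S = μ p_S` says exactly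
that `2 d_v(S, V \ S) = μ` at every vertex. -/

theorem SimpleGraph.lapMatrix_mulVec_apply_eq_sum_sub {R : Type*} [NonAssocRing R]
    (G : SimpleGraph V) [DecidableRel G.Adj] (x : V → R) (v : V) :
    (G.lapMatrix R *ᵥ x) v = ∑ u ∈ G.neighborFinset v, (x v - x u) := by
  rw [G.lapMatrix_mulVec_apply, Finset.sum_sub_distrib, Finset.sum_const,
    G.card_neighborFinset_eq_degree, nsmul_eq_mul]

lemma pvec_ne_zero (S : Finset V) (v : V) : pvec S v ≠ 0 := by
  unfold pvec; split_ifs <;> norm_num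

lemma pvec_sub_pvec (S : Finset V) (u v : V) :
    pvec S v - pvec S u = if u ∈ (if v ∈ S then Sᶜ else S) then 2 * pvec S v else 0 := by
  unfold pvec; by_cases hv : v ∈ S <;> by_cases hu : u ∈ S <;> simp [hu, hv] <;> norm_num

lemma lapMatrix_mulVec_pvec_apply (G : SimpleGraph V) [DecidableRel G.Adj] (S : Finset V)
    (v : V) : (G.lapMatrix ℝ *ᵥ pvec S) v =
      2 * ((if v ∈ S then Sᶜ else S).filter (fun u => G.Adj v u)).card * pvec S v := by
  rw [G.lapMatrix_mulVec_apply_eq_sum_sub]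
  have hcross : (G.neighborFinset v).filter (· ∈ (if v ∈ S then Sᶜ else S)) =
      (if v ∈ S then Sᶜ else S).filter (fun u => G.Adj v u) := by
    ext u
    simp only [Finset.mem_filter, G.mem_neighborFinset, and_comm]
  simp_rw [pvec_sub_pvec, ← Finset.sum_filter, hcross, Finset.sum_const, nsmul_eq_mul]
  ring

/-- `pₛ` is an eigenvector of `L(G)` for the eigenvalue `μ` iff every vertex has exactly `μ/2`
neighbours on the opposite side of the partition `{S, V \ S}`. -/
theorem stmt11 (G : SimpleGraph V) [DecidableRel G.Adj] (S : Finset V) (μ : ℝ) :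
    G.lapMatrix ℝ *ᵥ pvec S = μ • pvec S ↔
      ∀ v : V, (((if v ∈ S then Sᶜ else S).filter (fun u => G.Adj v u)).card : ℝ) = μ / 2 := by
  rw [funext_iff]
  refine forall_congr' fun v => ?_
  rw [lapMatrix_mulVec_pvec_apply, Pi.smul_apply, smul_eq_mul,
    mul_left_inj' (pvec_ne_zero S v), eq_div_iff two_ne_zero, mul_comm]
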